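/- arXiv:2109.12542 — 7 statements merged into one kernel-verified Lean document; each statement's English description precedes it below -/
import Mathlib

section
/- Let A be a complex vector space with a commutative bilinear multiplication (a,b) ↦ ab. Then the identity (n−k)(m−n−k+1)·a(bc) + (k−m)(n−k−m+1)·b(ca) + (m−n)(k−m−n+1)·c(ab) = 0 holds for all a,b,c ∈ A and all integers m,n,k if and only if the multiplication on A is associative, i.e., (ab)c = a(bc) for all a,b,c ∈ A. -/
/-- For a commutative bilinear multiplication on a complex vector space `A`, the identity
`(n−k)(m−n−k+1)·a(bc) + (k−m)(n−k−m+1)·b(ca) + (m−n)(k−m−n+1)·c(ab) = 0`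
holds for all `a,b,c ∈ A` and all integers `m,n,k` iff the multiplication is associative. -/
theorem identity_iff_assoc {A : Type*} [AddCommGroup A] [Module ℂ A]
    (mul : A →ₗ[ℂ] A →ₗ[ℂ] A) (hcomm : ∀ a b : A, mul a b = mul b a) :
    (∀ (a b c : A) (m n k : ℤ),
        (((n - k) * (m - n - k + 1) : ℤ) : ℂ) • mul a (mul b c)
        + (((k - m) * (n - k - m + 1) : ℤ) : ℂ) • mul b (mul c a)
        + (((m - n) * (k - m - n + 1) : ℤ) : ℂ) • mul c (mul a b) = 0)
      ↔ (∀ a b c : A, mul (mul a b) c = mul a (mul b c)) := by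
  constructor
  · intro h
    have key : ∀ x y z : A, mul x (mul y z) = mul y (mul z x) := by
      intro x y z
      have h2 := h x y z 0 0 2
      norm_num at h2
      have h3 : (2:ℂ) • (mul x (mul y z) - mul y (mul z x)) = 0 := by
        rw [smul_sub]
        linear_combination (norm := module) h2
      have h4 := smul_eq_zero.mp h3
      rcases h4 with h4 | h4
      · norm_num at h4
      · exact sub_eq_zero.mp h4
    intro a b c
    calc mul (mul a b) c = mul c (mul a b) := hcomm _ _
      _ = mul a (mul b c) := key c a b
  · intro h a b c m n k
    have e1 : mul b (mul c a) = mul a (mul b c) := by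
      rw [hcomm b (mul c a), h c a b, hcomm c (mul a b), h a b c]
    have e2 : mul c (mul a b) = mul a (mul b c) := by
      rw [hcomm c (mul a b), h a b c]
    rw [e1, e2, ← add_smul, ← add_smul]
    have : ((((n - k) * (m - n - k + 1) : ℤ) : ℂ) + (((k - m) * (n - k - m + 1) : ℤ) : ℂ)
        + (((m - n) * (k - m - n + 1) : ℤ) : ℂ)) = 0 := by push_cast; ring
    rw [this, zero_smul]
end

section
/- Let A be a complex vector space with a commutative bilinear multiplication (a,b) ↦ ab and a symmetric bilinear form ⟨·,·⟩. Then the identity C(m,3)(n−k)⟨a,bc⟩ + C(n,3)(k−m)⟨b,ca⟩ + C(k,3)(m−n)⟨c,ab⟩ = 0 holds for all a,b,c ∈ A and all integers m,n,k with m+n+k = 3 if and only if the form is associative, i.e., ⟨ab,c⟩ = ⟨a,bc⟩ for all a,b,c ∈ A. -/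
/-- For a commutative bilinear multiplication and a symmetric bilinear form on a complex
vector space `A`, the identity
`C(m,3)(n−k)⟨a,bc⟩ + C(n,3)(k−m)⟨b,ca⟩ + C(k,3)(m−n)⟨c,ab⟩ = 0`
holds for all `a,b,c ∈ A` and all integers `m,n,k` with `m+n+k = 3` iff the form is
associative, where `C(m,3) = m(m−1)(m−2)/6`. -/
theorem form_identity_iff_assoc_form {A : Type*} [AddCommGroup A] [Module ℂ A]
    (mul : A →ₗ[ℂ] A →ₗ[ℂ] A) (form : A →ₗ[ℂ] A →ₗ[ℂ] ℂ)
    (hcomm : ∀ a b : A, mul a b = mul b a)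
    (hsymm : ∀ a b : A, form a b = form b a) :
    (∀ (a b c : A) (m n k : ℤ), m + n + k = 3 →
        ((m : ℂ) * ((m : ℂ) - 1) * ((m : ℂ) - 2) / 6) * ((n - k : ℤ) : ℂ) * form a (mul b c)
        + ((n : ℂ) * ((n : ℂ) - 1) * ((n : ℂ) - 2) / 6) * ((k - m : ℤ) : ℂ) * form b (mul c a)
        + ((k : ℂ) * ((k : ℂ) - 1) * ((k : ℂ) - 2) / 6) * ((m - n : ℤ) : ℂ) * form c (mul a b)
          = 0)
      ↔ (∀ a b c : A, form (mul a b) c = form a (mul b c)) := by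
  constructor
  · intro h a b c
    have H := h a b c 3 1 (-1) (by norm_num)
    push_cast at H
    norm_num at H
    -- H : form a (mul b c) - form c (mul a b) = 0 or similar
    rw [hsymm (mul a b) c]
    linear_combination -H / 2
  · intro h a b c m n k hmnk
    have e1 : form b (mul c a) = form a (mul b c) := by
      rw [← h b c a, hsymm]
    have e2 : form c (mul a b) = form a (mul b c) := by
      rw [← h c a b, hsymm, ← h b c a, hsymm]
    rw [e1, e2]
    have hk : (k : ℂ) = 3 - m - n := by
      have : (↑(m + n + k) : ℂ) = 3 := by rw [hmnk]; norm_num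
      push_cast at this; linear_combination this
    push_cast
    rw [hk]
    ring
end

section
/- Let A be a complex vector space with a commutative bilinear multiplication (a,b) ↦ ab, and let U be a complex vector space with a bilinear map A × U → U, (a,u) ↦ au. Then the identity (n−2k)(m−2n−2k+2)·a(bu) − (m−2k)(n−2m−2k+2)·b(au) − 2(m−n)(m+n−2k−1)·(ab)u = 0 holds for all a,b ∈ A, u ∈ U and all integers m,n,k if and only if a(bu) = (ab)u = b(au) for all a,b ∈ A and u ∈ U. -/
/-- For a commutative bilinear multiplication on `A` and a bilinear action of `A` on `U`,
the identity
`(n−2k)(m−2n−2k+2)·a(bu) − (m−2k)(n−2m−2k+2)·b(au) − 2(m−n)(m+n−2k−1)·(ab)u = 0`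
holds for all `a,b ∈ A`, `u ∈ U` and all integers `m,n,k` iff
`a(bu) = (ab)u = b(au)` for all `a,b ∈ A`, `u ∈ U`. -/
theorem action_identity_iff_assoc_action {A U : Type*}
    [AddCommGroup A] [Module ℂ A] [AddCommGroup U] [Module ℂ U]
    (mul : A →ₗ[ℂ] A →ₗ[ℂ] A) (act : A →ₗ[ℂ] U →ₗ[ℂ] U)
    (hcomm : ∀ a b : A, mul a b = mul b a) :
    (∀ (a b : A) (u : U) (m n k : ℤ),
        (((n - 2*k) * (m - 2*n - 2*k + 2) : ℤ) : ℂ) • act a (act b u)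
        - (((m - 2*k) * (n - 2*m - 2*k + 2) : ℤ) : ℂ) • act b (act a u)
        - ((2 * (m - n) * (m + n - 2*k - 1) : ℤ) : ℂ) • act (mul a b) u = 0)
      ↔ (∀ (a b : A) (u : U),
          act a (act b u) = act (mul a b) u ∧ act (mul a b) u = act b (act a u)) := by
  constructor
  · intro h a b u
    have h1 := h a b u 0 2 0
    have h2 := h a b u 2 1 0
    norm_num at h1 h2
    have hXZ : act a (act b u) = act (mul a b) u := by
      linear_combination (norm := module) (-(4:ℂ)⁻¹ : ℂ) • h1
    refine ⟨hXZ, ?_⟩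
    linear_combination (norm := module) (-(2:ℂ)⁻¹ : ℂ) • h2 + hXZ
  · intro h a b u m n k
    obtain ⟨h1, h2⟩ := h a b u
    rw [h1, h2, ← sub_smul, ← sub_smul]
    convert zero_smul ℂ (act b (act a u))
    push_cast
    ring
end

section
/- Let A be a complex vector space with a symmetric bilinear form ⟨·,·⟩_A, let U be a complex vector space with a bilinear map A × U → U, (a,u) ↦ au, a symmetric bilinear form ⟨·,·⟩_U, and a symmetric bilinear map ∘ : U × U → A. Then the identity (1/6)m(m−1)(m−2)⟨a, u∘v⟩_A − (1/8)(m−2n)k(k−1)⟨v, au⟩_U − (1/8)(m−2k)n(n−1)⟨u, av⟩_U = 0 holds for all a ∈ A, u,v ∈ U and all integers m,n,k with m+n+k = 2 if and only if ⟨v, au⟩_U = ⟨u, av⟩_U = (4/3)⟨a, u∘v⟩_A for all a ∈ A and u,v ∈ U. -/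
/-- Let `A` carry a symmetric bilinear form `⟨·,·⟩_A`, let `A` act bilinearly on `U`, and
let `U` carry a symmetric bilinear form `⟨·,·⟩_U` and a symmetric bilinear map
`∘ : U × U → A`. The identity
`(1/6)m(m−1)(m−2)⟨a,u∘v⟩_A − (1/8)(m−2n)k(k−1)⟨v,au⟩_U − (1/8)(m−2k)n(n−1)⟨u,av⟩_U = 0`
holds for all `a ∈ A`, `u,v ∈ U` and all integers `m,n,k` with `m+n+k = 2` iff
`⟨v,au⟩_U = ⟨u,av⟩_U = (4/3)⟨a,u∘v⟩_A` for all `a ∈ A`, `u,v ∈ U`. -/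
theorem form_identity_iff_compatibility {A U : Type*}
    [AddCommGroup A] [Module ℂ A] [AddCommGroup U] [Module ℂ U]
    (formA : A →ₗ[ℂ] A →ₗ[ℂ] ℂ) (formU : U →ₗ[ℂ] U →ₗ[ℂ] ℂ)
    (act : A →ₗ[ℂ] U →ₗ[ℂ] U) (circ : U →ₗ[ℂ] U →ₗ[ℂ] A)
    (hsymmA : ∀ a b : A, formA a b = formA b a)
    (hsymmU : ∀ u v : U, formU u v = formU v u)
    (hsymmC : ∀ u v : U, circ u v = circ v u) :
    (∀ (a : A) (u v : U) (m n k : ℤ), m + n + k = 2 →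
        (1/6 : ℂ) * (m : ℂ) * ((m : ℂ) - 1) * ((m : ℂ) - 2) * formA a (circ u v)
        - (1/8 : ℂ) * ((m - 2*n : ℤ) : ℂ) * (k : ℂ) * ((k : ℂ) - 1) * formU v (act a u)
        - (1/8 : ℂ) * ((m - 2*k : ℤ) : ℂ) * (n : ℂ) * ((n : ℂ) - 1) * formU u (act a v)
          = 0)
      ↔ (∀ (a : A) (u v : U),
          formU v (act a u) = formU u (act a v)
          ∧ formU u (act a v) = (4/3 : ℂ) * formA a (circ u v)) := by
  constructor
  · intro h a u v
    have h1 := h a u v 0 3 (-1) (by ring)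
    have h2 := h a u v 4 (-1) (-1) (by ring)
    push_cast at h1 h2
    norm_num at h1 h2
    have hPQ : formU v (act a u) = formU u (act a v) := by linear_combination (2/3 : ℂ) * h1
    refine ⟨hPQ, ?_⟩
    linear_combination -h2 / 3 - hPQ / 2
  · intro h a u v m n k hmnk
    obtain ⟨hPQ, hQX⟩ := h a u v
    rw [hPQ, hQX]
    have hk : k = 2 - m - n := by omega
    subst hk
    push_cast
    ring
end

section
/- Let A be a commutative associative algebra over ℂ equipped with a symmetric bilinear form ⟨·,·⟩ satisfying ⟨ab,c⟩ = ⟨a,bc⟩ for all a,b,c ∈ A. Then the space L(A) = (A ⊗ ℂ[t,t⁻¹]) ⊕ ℂK, with the bilinear bracket determined by [a⊗tᵐ, b⊗tⁿ] = ½(m−n)(ab)⊗t^{m+n−1} + C(m,3)⟨a,b⟩δ_{m+n,2}K and [K, x] = [x, K] = 0 for all x ∈ L(A), is a Lie algebra over ℂ (the bracket is alternating and satisfies the Jacobi identity). -/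
/-!
Since `br` only reads the `ℤ →₀ A` components of its arguments (`K` is central), it is the
bilinear map `brₗ` on `ℤ →₀ A` obtained by extending `brGen` from generators `a ⊗ tᵐ`.
Antisymmetry and the Jacobi identity are then multilinear and reduce to generators. There,
commutativity, associativity and invariance of the form turn every product into `(ab)c` and every
value of the form into `⟨ab, c⟩`, and what is left are polynomial identities in `m, n, p`: the
`A`-parts carry the coefficients `(m - n)(m + n - 1 - p)/4`, which sum to zero over the cyclic
permutations, and the central parts only occur for `m + n + p = 3`, where the cubic terms cancel.
Alternation follows from antisymmetry because `2` is invertible in `ℂ`.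
-/

/-- The bracket `[a⊗tᵐ, b⊗tⁿ] = ½(m−n)(ab)⊗t^{m+n−1} + C(m,3)⟨a,b⟩δ_{m+n,2}K`
on generators, valued in `L(A) = (A ⊗ ℂ[t,t⁻¹]) ⊕ ℂK`, where `A ⊗ ℂ[t,t⁻¹]` is
modeled as `ℤ →₀ A` (with `a⊗tᵐ = Finsupp.single m a`) and the `ℂK` component is
the second coordinate. -/
noncomputable def brGen {A : Type*} [AddCommGroup A] [Module ℂ A]
    (mul : A →ₗ[ℂ] A →ₗ[ℂ] A) (form : A →ₗ[ℂ] A →ₗ[ℂ] ℂ)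
    (m : ℤ) (a : A) (n : ℤ) (b : A) : (ℤ →₀ A) × ℂ :=
  ((((m - n : ℤ) : ℂ) / 2) • Finsupp.single (m + n - 1) (mul a b),
   if m + n = 2 then ((m : ℂ) * ((m : ℂ) - 1) * ((m : ℂ) - 2) / 6) * form a b else 0)

/-- The bracket on all of `L(A) = (A ⊗ ℂ[t,t⁻¹]) ⊕ ℂK`, extending `brGen` with `K`
central (the `ℂK` components of the arguments bracket to zero with everything). -/
noncomputable def br {A : Type*} [AddCommGroup A] [Module ℂ A]
    (mul : A →ₗ[ℂ] A →ₗ[ℂ] A) (form : A →ₗ[ℂ] A →ₗ[ℂ] ℂ)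
    (x y : (ℤ →₀ A) × ℂ) : (ℤ →₀ A) × ℂ :=
  x.1.sum fun m a => y.1.sum fun n b => brGen mul form m a n b

section Bracket

variable {A : Type*} [AddCommGroup A] [Module ℂ A]
  (mul : A →ₗ[ℂ] A →ₗ[ℂ] A) (form : A →ₗ[ℂ] A →ₗ[ℂ] ℂ)

noncomputable def brGenₗ (m n : ℤ) : A →ₗ[ℂ] A →ₗ[ℂ] (ℤ →₀ A) × ℂ :=
  (((m - n : ℤ) : ℂ) / 2) • mul.compr₂ (LinearMap.inl ℂ _ ℂ ∘ₗ Finsupp.lsingle (m + n - 1))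
    + (if m + n = 2 then (m : ℂ) * (m - 1) * (m - 2) / 6 else 0) •
        form.compr₂ (LinearMap.inr ℂ (ℤ →₀ A) ℂ)

theorem brGenₗ_apply (m n : ℤ) (a b : A) :
    brGenₗ mul form m n a b = brGen mul form m a n b := by
  simp only [brGenₗ, brGen, Int.cast_sub, ite_smul, zero_smul, LinearMap.add_apply,
    LinearMap.smul_apply, LinearMap.compr₂_apply, LinearMap.coe_comp, LinearMap.coe_inl,
    Function.comp_apply, Finsupp.lsingle_apply, Prod.smul_mk, Finsupp.smul_single, smul_eq_mul,
    mul_zero]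
  split_ifs <;> simp

noncomputable def brₗ : (ℤ →₀ A) →ₗ[ℂ] (ℤ →₀ A) →ₗ[ℂ] (ℤ →₀ A) × ℂ :=
  Finsupp.lsum ℂ fun m => (Finsupp.lsum ℂ fun n => (brGenₗ mul form m n).flip).flip

theorem br_eq_brₗ (x y : (ℤ →₀ A) × ℂ) : br mul form x y = brₗ mul form x.1 y.1 := by
  simp [br, brₗ, brGenₗ_apply]

theorem brₗ_single_single (m n : ℤ) (a b : A) :
    brₗ mul form (Finsupp.single m a) (Finsupp.single n b) = brGen mul form m a n b := by
  simp [brₗ, brGenₗ_apply]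

theorem brGen_swap (hcomm : ∀ a b : A, mul a b = mul b a)
    (hsymm : ∀ a b : A, form a b = form b a) (m n : ℤ) (a b : A) :
    brGen mul form n b m a = -brGen mul form m a n b := by
  simp only [brGen, hcomm b a, hsymm b a, Prod.neg_mk, Prod.mk.injEq]
  constructor
  · rw [add_comm n m, ← neg_smul]
    congr 1
    push_cast
    ring
  · by_cases h : m + n = 2
    · rw [if_pos (by omega), if_pos h]
      obtain rfl : n = 2 - m := by omega
      push_cast
      ring
    · simp [h, show n + m ≠ 2 by omega]

theorem brₗ_flip (hcomm : ∀ a b : A, mul a b = mul b a)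
    (hsymm : ∀ a b : A, form a b = form b a) :
    (brₗ mul form).flip = -brₗ mul form :=
  Finsupp.lhom_ext fun n b => Finsupp.lhom_ext fun m a => by
    simpa [brₗ_single_single] using brGen_swap mul form hcomm hsymm n m b a

theorem brₗ_self (hcomm : ∀ a b : A, mul a b = mul b a)
    (hsymm : ∀ a b : A, form a b = form b a) (f : ℤ →₀ A) :
    brₗ mul form f f = 0 := by
  have hneg : brₗ mul form f f = -brₗ mul form f f := by
    simpa using LinearMap.congr_fun₂ (brₗ_flip mul form hcomm hsymm) f f
  have htwo : (2 : ℂ) • brₗ mul form f f = 0 := by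
    rw [two_smul]
    nth_rewrite 1 [hneg]
    exact neg_add_cancel _
  exact (smul_eq_zero.mp htwo).resolve_left two_ne_zero

theorem brₗ_brₗ_single (m n p : ℤ) (a b c : A) :
    brₗ mul form (brₗ mul form (Finsupp.single m a) (Finsupp.single n b)).1 (Finsupp.single p c)
      = (((m - n) / 2 * ((m + n - 1 - p) / 2) : ℂ) •
            Finsupp.single (m + n + p - 2) (mul (mul a b) c),
          if m + n + p = 3 then (m - n) / 2 * ((m + n - 1) * (m + n - 2) * (m + n - 3) / 6)
            * form (mul a b) c else 0) := by
  simp only [brₗ_single_single, brGen, Int.cast_sub, Finsupp.smul_single, Int.cast_add,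
    Int.cast_one, map_smul, LinearMap.smul_apply, smul_eq_mul, Prod.mk.injEq]
  constructor
  · rw [show m + n - 1 + p - 1 = m + n + p - 2 by ring, smul_smul, mul_comm]
  · simp only [show m + n - 1 + p = 2 ↔ m + n + p = 3 by omega]
    split_ifs <;> ring

noncomputable def brJacobiator (f g h : ℤ →₀ A) : (ℤ →₀ A) × ℂ :=
  brₗ mul form (brₗ mul form f g).1 h + brₗ mul form (brₗ mul form g h).1 f
    + brₗ mul form (brₗ mul form h f).1 g

theorem brJacobiator_cycle (f g h : ℤ →₀ A) :
    brJacobiator mul form f g h = brJacobiator mul form g h f := by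
  simp only [brJacobiator]
  abel

theorem brJacobiator_eq_zero_of_single_left {g h : ℤ →₀ A}
    (H : ∀ m a, brJacobiator mul form (Finsupp.single m a) g h = 0) (f : ℤ →₀ A) :
    brJacobiator mul form f g h = 0 := by
  induction f using Finsupp.induction_linear with
  | zero => simp [brJacobiator]
  | add f₁ f₂ h₁ h₂ =>
    have hadd : brJacobiator mul form (f₁ + f₂) g h
        = brJacobiator mul form f₁ g h + brJacobiator mul form f₂ g h := by
      simp only [brJacobiator, map_add, Prod.fst_add, LinearMap.add_apply]
      abel
    rw [hadd, h₁, h₂, add_zero]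
  | single m a => exact H m a

theorem brJacobiator_single (hcomm : ∀ a b : A, mul a b = mul b a)
    (hassoc : ∀ a b c : A, mul (mul a b) c = mul a (mul b c))
    (hsymm : ∀ a b : A, form a b = form b a)
    (hform : ∀ a b c : A, form (mul a b) c = form a (mul b c)) (m n p : ℤ) (a b c : A) :
    brJacobiator mul form (Finsupp.single m a) (Finsupp.single n b) (Finsupp.single p c) = 0 := by
  have hbca : mul (mul b c) a = mul (mul a b) c := by rw [hcomm _ a, hassoc]
  have hcab : mul (mul c a) b = mul (mul a b) c := by rw [hassoc, hcomm _ (mul a b)]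
  have fbca : form (mul b c) a = form (mul a b) c := by rw [hsymm, hform]
  have fcab : form (mul c a) b = form (mul a b) c := by rw [hform, hsymm]
  simp only [brJacobiator, brₗ_brₗ_single, hbca, hcab, fbca, fcab,
    show n + p + m = m + n + p by ring, show p + m + n = m + n + p by ring,
    Prod.mk_add_mk, ← add_smul, Prod.mk_eq_zero]
  constructor
  · convert zero_smul ℂ _
    ring
  · split_ifs with h
    · obtain rfl : p = 3 - m - n := by omega
      push_cast
      ring
    · simp

theorem brJacobiator_eq_zero (hcomm : ∀ a b : A, mul a b = mul b a)
    (hassoc : ∀ a b c : A, mul (mul a b) c = mul a (mul b c))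
    (hsymm : ∀ a b : A, form a b = form b a)
    (hform : ∀ a b c : A, form (mul a b) c = form a (mul b c)) (f g h : ℤ →₀ A) :
    brJacobiator mul form f g h = 0 := by
  -- cycling the arguments brings each of them in turn to the slot where we may induct
  refine brJacobiator_eq_zero_of_single_left mul form (fun m a => ?_) f
  rw [brJacobiator_cycle]
  refine brJacobiator_eq_zero_of_single_left mul form (fun n b => ?_) g
  rw [brJacobiator_cycle]
  refine brJacobiator_eq_zero_of_single_left mul form (fun p c => ?_) h
  rw [brJacobiator_cycle]
  exact brJacobiator_single mul form hcomm hassoc hsymm hform m n p a b c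

end Bracket

/-- If `A` is a commutative associative ℂ-algebra with a symmetric associative bilinear
form, then `L(A)` with the bracket `br` is a Lie algebra over ℂ: the bracket is
bilinear, alternating, and satisfies the Jacobi identity. -/
theorem LA_is_LieAlgebra {A : Type*} [AddCommGroup A] [Module ℂ A]
    (mul : A →ₗ[ℂ] A →ₗ[ℂ] A) (form : A →ₗ[ℂ] A →ₗ[ℂ] ℂ)
    (hcomm : ∀ a b : A, mul a b = mul b a)
    (hassoc : ∀ a b c : A, mul (mul a b) c = mul a (mul b c))
    (hsymm : ∀ a b : A, form a b = form b a)
    (hform : ∀ a b c : A, form (mul a b) c = form a (mul b c)) :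
    (∀ x y z : (ℤ →₀ A) × ℂ,
        br mul form (x + y) z = br mul form x z + br mul form y z)
    ∧ (∀ x y z : (ℤ →₀ A) × ℂ,
        br mul form x (y + z) = br mul form x y + br mul form x z)
    ∧ (∀ (c : ℂ) (x y : (ℤ →₀ A) × ℂ),
        br mul form (c • x) y = c • br mul form x y)
    ∧ (∀ (c : ℂ) (x y : (ℤ →₀ A) × ℂ),
        br mul form x (c • y) = c • br mul form x y)
    ∧ (∀ x : (ℤ →₀ A) × ℂ, br mul form x x = 0)
    ∧ (∀ x y z : (ℤ →₀ A) × ℂ,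
        br mul form (br mul form x y) z + br mul form (br mul form y z) x
          + br mul form (br mul form z x) y = 0) := by
  simp only [br_eq_brₗ, Prod.fst_add, Prod.smul_fst, map_add, map_smul, LinearMap.add_apply,
    LinearMap.smul_apply, implies_true, true_and]
  exact ⟨fun x => brₗ_self mul form hcomm hsymm x.1,
    fun x y z => brJacobiator_eq_zero mul form hcomm hassoc hsymm hform x.1 y.1 z.1⟩
end

section
/- Let A be a commutative associative algebra over ℂ with a symmetric associative bilinear form ⟨·,·⟩, and let L(A) = (A ⊗ ℂ[t,t⁻¹]) ⊕ ℂK be the Lie algebra with bracket [a⊗tᵐ, b⊗tⁿ] = ½(m−n)(ab)⊗t^{m+n−1} + C(m,3)⟨a,b⟩δ_{m+n,2}K and K central. Let U be an A-module (a complex vector space with a bilinear action satisfying a(bu) = (ab)u for all a,b ∈ A, u ∈ U). Then U ⊗ ℂ[t,t⁻¹] is a module for the Lie algebra L(A) under the action (a⊗tᵐ)·(u⊗tⁿ) = ¼(m−2n)(au)⊗t^{m+n−1} and K·w = 0 for all w; i.e., [x,y]·w = x·(y·w) − y·(x·w) for all x,y ∈ L(A), w ∈ U ⊗ ℂ[t,t⁻¹].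 -/
/-- The action `(a⊗tᵐ)·(u⊗tⁿ) = ¼(m−2n)(au)⊗t^{m+n−1}` of `L(A)` on
`U ⊗ ℂ[t,t⁻¹]` (modeled as `ℤ →₀ U`), with `K` acting as `0`. -/
noncomputable def lact {A U : Type*} [AddCommGroup A] [Module ℂ A]
    [AddCommGroup U] [Module ℂ U] (act : A →ₗ[ℂ] U →ₗ[ℂ] U)
    (x : (ℤ →₀ A) × ℂ) (w : ℤ →₀ U) : ℤ →₀ U :=
  x.1.sum fun m a => w.sum fun n u =>
    (((m - 2*n : ℤ) : ℂ) / 4) • Finsupp.single (m + n - 1) (act a u)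

/-!
Both sides are additive in `x`, `y` and `w`, and `K` acts by zero, so the central term of
the bracket never contributes; it suffices to take `x = a⊗tᵐ`, `y = b⊗tⁿ`, `w = u⊗tᵖ`.
Then both sides are multiples of `(ab)u⊗t^{m+n+p-2}`, using `a(bu) = (ab)u` and `ba = ab`, and
the coefficients agree by the polynomial identity
`¼(m+n-1-2p)·½(m-n) = ¼(m-2(n+p-1))·¼(n-2p) - ¼(n-2(m+p-1))·¼(m-2p)`.
-/

section

variable {A U : Type*} [AddCommGroup A] [Module ℂ A] [AddCommGroup U] [Module ℂ U]
  (mul : A →ₗ[ℂ] A →ₗ[ℂ] A) (form : A →ₗ[ℂ] A →ₗ[ℂ] ℂ) (act : A →ₗ[ℂ] U →ₗ[ℂ] U)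

theorem lact_zero_right (x : (ℤ →₀ A) × ℂ) : lact act x 0 = 0 := by
  simp [lact]

theorem lact_add_left (x y : (ℤ →₀ A) × ℂ) (w : ℤ →₀ U) :
    lact act (x + y) w = lact act x w + lact act y w := by
  unfold lact
  rw [Prod.fst_add, Finsupp.sum_add_index'] <;>
    simp [smul_add, ← Finsupp.sum_add]

theorem lact_mk_add_left (f₁ f₂ : ℤ →₀ A) (c : ℂ) (w : ℤ →₀ U) :
    lact act (f₁ + f₂, c) w = lact act (f₁, c) w + lact act (f₂, c) w :=
  lact_add_left act (f₁, c) (f₂, c) w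

theorem lact_add_right (x : (ℤ →₀ A) × ℂ) (w₁ w₂ : ℤ →₀ U) :
    lact act x (w₁ + w₂) = lact act x w₁ + lact act x w₂ := by
  unfold lact
  rw [← Finsupp.sum_add]
  refine Finsupp.sum_congr fun m _ => ?_
  rw [Finsupp.sum_add_index'] <;> simp

theorem lact_single_single (c : ℂ) (m : ℤ) (a : A) (p : ℤ) (u : U) :
    lact act (Finsupp.single m a, c) (Finsupp.single p u)
      = Finsupp.single (m + p - 1) ((((m - 2 * p : ℤ) : ℂ) / 4) • act a u) := by
  unfold lact
  rw [Finsupp.sum_single_index, Finsupp.sum_single_index] <;> simp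

theorem brGen_zero_left (m n : ℤ) (b : A) : brGen mul form m 0 n b = 0 := by
  simp [brGen, Prod.ext_iff]

theorem brGen_zero_right (m n : ℤ) (a : A) : brGen mul form m a n 0 = 0 := by
  simp [brGen, Prod.ext_iff]

theorem brGen_add_left (m n : ℤ) (a₁ a₂ b : A) :
    brGen mul form m (a₁ + a₂) n b = brGen mul form m a₁ n b + brGen mul form m a₂ n b := by
  simp [brGen, Finsupp.single_add, smul_add, mul_add, apply_ite₂ (· + ·)]

theorem brGen_add_right (m n : ℤ) (a b₁ b₂ : A) :
    brGen mul form m a n (b₁ + b₂) = brGen mul form m a n b₁ + brGen mul form m a n b₂ := by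
  simp [brGen, Finsupp.single_add, smul_add, mul_add, apply_ite₂ (· + ·)]

theorem br_add_left (f₁ f₂ : ℤ →₀ A) (c : ℂ) (y : (ℤ →₀ A) × ℂ) :
    br mul form (f₁ + f₂, c) y = br mul form (f₁, c) y + br mul form (f₂, c) y := by
  unfold br
  rw [Finsupp.sum_add_index']
  · exact fun m => Finset.sum_eq_zero fun n _ => brGen_zero_left mul form m n _
  · intro m a₁ a₂
    rw [← Finsupp.sum_add]
    exact Finsupp.sum_congr fun n _ => brGen_add_left mul form m n a₁ a₂ _

theorem br_add_right (x : (ℤ →₀ A) × ℂ) (g₁ g₂ : ℤ →₀ A) (d : ℂ) :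
    br mul form x (g₁ + g₂, d) = br mul form x (g₁, d) + br mul form x (g₂, d) := by
  unfold br
  rw [← Finsupp.sum_add]
  refine Finsupp.sum_congr fun m _ => ?_
  rw [Finsupp.sum_add_index']
  · exact fun n => brGen_zero_right mul form m n _
  · exact fun n b₁ b₂ => brGen_add_right mul form m n _ b₁ b₂

theorem br_single_single (c d : ℂ) (m n : ℤ) (a b : A) :
    br mul form (Finsupp.single m a, c) (Finsupp.single n b, d) = brGen mul form m a n b := by
  unfold br
  rw [Finsupp.sum_single_index, Finsupp.sum_single_index]
  · exact brGen_zero_right mul form m n a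
  · exact Finset.sum_eq_zero fun k _ => brGen_zero_left mul form m k _

variable {mul form act}

theorem lact_brGen_single (hcomm : ∀ a b : A, mul a b = mul b a)
    (hact : ∀ (a b : A) (u : U), act a (act b u) = act (mul a b) u)
    (c d : ℂ) (m n : ℤ) (a b : A) (p : ℤ) (u : U) :
    lact act (brGen mul form m a n b) (Finsupp.single p u)
      = lact act (Finsupp.single m a, c)
          (lact act (Finsupp.single n b, d) (Finsupp.single p u))
        - lact act (Finsupp.single n b, d)
            (lact act (Finsupp.single m a, c) (Finsupp.single p u)) := by
  have coeff : ((m + n - 1 - 2 * p : ℤ) : ℂ) / 4 * ((m - n : ℤ) / 2)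
      = ((m - 2 * (n + p - 1) : ℤ) : ℂ) / 4 * ((n - 2 * p : ℤ) / 4)
        - ((n - 2 * (m + p - 1) : ℤ) : ℂ) / 4 * ((m - 2 * p : ℤ) / 4) := by
    push_cast; ring
  rw [brGen, Finsupp.smul_single, lact_single_single, lact_single_single, lact_single_single,
    lact_single_single, lact_single_single, show m + n - 1 + p - 1 = m + (n + p - 1) - 1 by ring,
    show n + (m + p - 1) - 1 = m + (n + p - 1) - 1 by ring, ← Finsupp.single_sub]
  simp only [map_smul, LinearMap.smul_apply, smul_smul, hact, hcomm b a, ← sub_smul, coeff]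

theorem lact_brGen (hcomm : ∀ a b : A, mul a b = mul b a)
    (hact : ∀ (a b : A) (u : U), act a (act b u) = act (mul a b) u)
    (c d : ℂ) (m n : ℤ) (a b : A) (w : ℤ →₀ U) :
    lact act (brGen mul form m a n b) w
      = lact act (Finsupp.single m a, c) (lact act (Finsupp.single n b, d) w)
        - lact act (Finsupp.single n b, d) (lact act (Finsupp.single m a, c) w) := by
  induction w using Finsupp.induction_linear with
  | zero => simp only [lact_zero_right, sub_zero]
  | add w₁ w₂ ih₁ ih₂ =>
    simp only [lact_add_right, ih₁, ih₂]
    abel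
  | single p u => exact lact_brGen_single hcomm hact c d m n a b p u

theorem lact_br_single_left (hcomm : ∀ a b : A, mul a b = mul b a)
    (hact : ∀ (a b : A) (u : U), act a (act b u) = act (mul a b) u)
    (c d : ℂ) (m : ℤ) (a : A) (g : ℤ →₀ A) (w : ℤ →₀ U) :
    lact act (br mul form (Finsupp.single m a, c) (g, d)) w
      = lact act (Finsupp.single m a, c) (lact act (g, d) w)
        - lact act (g, d) (lact act (Finsupp.single m a, c) w) := by
  induction g using Finsupp.induction_linear with
  | zero => simp [br, lact]
  | add g₁ g₂ ih₁ ih₂ =>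
    rw [br_add_right, lact_add_left, lact_mk_add_left, lact_mk_add_left,
      lact_add_right, ih₁, ih₂]
    abel
  | single n b => rw [br_single_single, lact_brGen hcomm hact c d]

end

theorem UtC_is_LA_module_general {A U : Type*} [AddCommGroup A] [Module ℂ A]
    [AddCommGroup U] [Module ℂ U]
    (mul : A →ₗ[ℂ] A →ₗ[ℂ] A) (form : A →ₗ[ℂ] A →ₗ[ℂ] ℂ)
    (act : A →ₗ[ℂ] U →ₗ[ℂ] U)
    (hcomm : ∀ a b : A, mul a b = mul b a)
    (hact : ∀ (a b : A) (u : U), act a (act b u) = act (mul a b) u) :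
    ∀ (x y : (ℤ →₀ A) × ℂ) (w : ℤ →₀ U),
      lact act (br mul form x y) w
        = lact act x (lact act y w) - lact act y (lact act x w) := by
  rintro ⟨f, c⟩ ⟨g, d⟩ w
  induction f using Finsupp.induction_linear with
  | zero => simp [br, lact]
  | add f₁ f₂ ih₁ ih₂ =>
    rw [br_add_left, lact_add_left, lact_mk_add_left, lact_mk_add_left,
      lact_add_right, ih₁, ih₂]
    abel
  | single m a => exact lact_br_single_left hcomm hact c d m a g w

/-- If `A` is a commutative associative ℂ-algebra with a symmetric associative bilinear
form and `U` is an `A`-module, then `U ⊗ ℂ[t,t⁻¹]` is a module for the Lie algebra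
`L(A)`: `[x,y]·w = x·(y·w) − y·(x·w)`. -/
theorem UtC_is_LA_module {A U : Type*} [AddCommGroup A] [Module ℂ A]
    [AddCommGroup U] [Module ℂ U]
    (mul : A →ₗ[ℂ] A →ₗ[ℂ] A) (form : A →ₗ[ℂ] A →ₗ[ℂ] ℂ)
    (act : A →ₗ[ℂ] U →ₗ[ℂ] U)
    (hcomm : ∀ a b : A, mul a b = mul b a)
    (hassoc : ∀ a b c : A, mul (mul a b) c = mul a (mul b c))
    (hsymm : ∀ a b : A, form a b = form b a)
    (hform : ∀ a b c : A, form (mul a b) c = form a (mul b c))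
    (hact : ∀ (a b : A) (u : U), act a (act b u) = act (mul a b) u) :
    ∀ (x y : (ℤ →₀ A) × ℂ) (w : ℤ →₀ U),
      lact act (br mul form x y) w
        = lact act x (lact act y w) - lact act y (lact act x w) :=
  UtC_is_LA_module_general mul form act hcomm hact
end

section
/- Let p ∈ ℂ[X] be a monic polynomial of degree at least 1, and let A = ℂ[X]/(p). Then there exists a non-degenerate symmetric bilinear form B on A satisfying B(uv,w) = B(u,vw) for all u,v,w ∈ A. -/
/-! The coefficient of `X ^ (deg p - 1)` of the reduced representative is a linear functional `L`
on `A = R[X]/(p)`, and `B(u, v) = L(uv)` is symmetric and associative because `A` is commutative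
and associative. It is non-degenerate: if `u` is represented by `q ≠ 0` with `deg q < deg p`, then
`u · X ^ (deg p - 1 - deg q)` is represented by a polynomial of degree `deg p - 1` whose top
coefficient is the leading coefficient of `q`. -/

open Polynomial

namespace AdjoinRoot

variable {R : Type*} [CommRing R] {p : R[X]} (hp : p.Monic)

noncomputable def topCoeff : AdjoinRoot p →ₗ[R] R :=
  (lcoeff R (p.natDegree - 1)).comp (modByMonicHom hp)

theorem topCoeff_mk_of_degree_lt [Nontrivial R] {f : R[X]} (hf : f.degree < p.degree) :
    topCoeff hp (mk p f) = f.coeff (p.natDegree - 1) := by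
  simp [topCoeff, modByMonicHom_mk, (modByMonic_eq_self_iff hp).2 hf]

theorem exists_topCoeff_mul_ne_zero [Nontrivial R] {u : AdjoinRoot p} (hu : u ≠ 0) :
    ∃ v, topCoeff hp (u * v) ≠ 0 := by
  obtain ⟨q, hq_deg, rfl⟩ : ∃ q : R[X], q.degree < p.degree ∧ mk p q = u := by
    obtain ⟨f, rfl⟩ := mk_surjective u
    refine ⟨f %ₘ p, degree_modByMonic_lt f hp, ?_⟩
    rw [← modByMonicHom_mk hp]
    exact mk_leftInverse hp _
  have hq : q ≠ 0 := by
    rintro rfl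
    exact hu (map_zero _)
  have hq_natDeg : q.natDegree < p.natDegree := natDegree_lt_natDegree hq hq_deg
  set k := p.natDegree - 1 - q.natDegree
  have hqX_natDeg : (q * X ^ k).natDegree = p.natDegree - 1 := by
    rw [natDegree_mul_X_pow k hq]
    omega
  refine ⟨mk p (X ^ k), ?_⟩
  rw [← map_mul, topCoeff_mk_of_degree_lt hp (degree_lt_degree (by omega)), ← hqX_natDeg,
    coeff_natDegree, leadingCoeff_mul_X_pow]
  exact leadingCoeff_ne_zero.mpr hq

end AdjoinRoot

theorem exists_nondegenerate_form_general (p : Polynomial ℂ) (hp : p.Monic) :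
    ∃ B : (Polynomial ℂ ⧸ Ideal.span {p}) →ₗ[ℂ]
        (Polynomial ℂ ⧸ Ideal.span {p}) →ₗ[ℂ] ℂ,
      (∀ u v, B u v = B v u)
      ∧ (∀ u v w, B (u * v) w = B u (v * w))
      ∧ (∀ u, (∀ v, B u v = 0) → u = 0) := by
  refine ⟨(LinearMap.mul ℂ (AdjoinRoot p)).compr₂ (AdjoinRoot.topCoeff hp), fun u v => ?_,
    fun u v w => ?_, fun u hu => ?_⟩
  · exact congrArg (AdjoinRoot.topCoeff hp) (mul_comm (u : AdjoinRoot p) v)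
  · exact congrArg (AdjoinRoot.topCoeff hp) (mul_assoc (u : AdjoinRoot p) v w)
  · by_contra hu_ne
    obtain ⟨v, hv⟩ := AdjoinRoot.exists_topCoeff_mul_ne_zero hp hu_ne
    exact hv (hu v)

/-- For any monic polynomial `p ∈ ℂ[X]` of degree at least `1`, there exists a
non-degenerate symmetric associative bilinear form on `A = ℂ[X]/(p)`. -/
theorem exists_nondegenerate_form (p : Polynomial ℂ) (hp : p.Monic)
    (hdeg : 1 ≤ p.natDegree) :
    ∃ B : (Polynomial ℂ ⧸ Ideal.span {p}) →ₗ[ℂ]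
        (Polynomial ℂ ⧸ Ideal.span {p}) →ₗ[ℂ] ℂ,
      (∀ u v, B u v = B v u)
      ∧ (∀ u v w, B (u * v) w = B u (v * w))
      ∧ (∀ u, (∀ v, B u v = 0) → u = 0) :=
  exists_nondegenerate_form_general p hp
end
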